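/- arXiv:2007.06112 — 3 statements merged into one kernel-verified Lean document; each statement's English description precedes it below -/
import Mathlib

section
/- Let X be an n-by-n complex matrix with no eigenvalue on the closed negative real axis (-infinity, 0], and let R be the principal square root of X, i.e. R² = X and every eigenvalue of R has strictly positive real part. If X is unitary (X† X = I), then R is unitary. -/
/-!
Since `X⁻¹ = Xᴴ`, the matrix `(Rᴴ)⁻¹` is again a square root of `X`, and its eigenvalues
`conj (λ⁻¹)` (for `λ` an eigenvalue of `R`) lie in the open right half-plane as well. Square roots
with spectrum in the right half-plane are unique: if `S² = R²` then `Y = S - R` solves the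
Sylvester equation `S * Y = Y * (-R)`, and as `σ(S)` and `σ(-R)` are disjoint, `χ_S(-R)` is
invertible while `Y * χ_S(-R) = χ_S(S) * Y = 0`. Hence `(Rᴴ)⁻¹ = R`.
-/

open Matrix Polynomial

theorem SemiconjBy.aeval {R A : Type*} [CommSemiring R] [Semiring A] [Algebra R A] {a x y : A}
    (h : SemiconjBy a x y) (p : R[X]) : SemiconjBy a (aeval x p) (aeval y p) := by
  induction p using Polynomial.induction_on' with
  | add p q hp hq => simpa only [map_add] using hp.add_right hq
  | monomial k r =>
    simp only [aeval_monomial]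
    exact SemiconjBy.mul_right (Algebra.commute_algebraMap_right r a) (h.pow_right k)

theorem eq_zero_of_mul_eq_mul_of_aeval_eq_zero {K A : Type*} [Field K] [IsAlgClosed K] [Ring A]
    [Algebra K A] {a b y : A} (h : a * y = y * b) {p : K[X]} (hp : aeval a p = 0)
    (hdeg : 0 < p.degree) (hroots : ∀ z ∈ spectrum K b, ¬ p.IsRoot z) : y = 0 := by
  have hunit : IsUnit (aeval b p) := by
    by_contra hnu
    rw [← spectrum.zero_mem_iff K, spectrum.map_polynomial_aeval_of_degree_pos b p hdeg] at hnu
    obtain ⟨z, hz, hz0⟩ := hnu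
    exact hroots z hz hz0
  have hy : y * aeval b p = 0 := by
    rw [(SemiconjBy.aeval (h.symm : SemiconjBy y b a) p).eq, hp, zero_mul]
  exact hunit.mul_left_eq_zero.mp hy

theorem Matrix.eq_zero_of_mul_eq_mul_of_disjoint_spectrum {n K : Type*} [Fintype n] [DecidableEq n]
    [Field K] [IsAlgClosed K] {A B Y : Matrix n n K} (h : A * Y = Y * B)
    (hAB : Disjoint (spectrum K A) (spectrum K B)) : Y = 0 := by
  cases isEmpty_or_nonempty n
  · exact Subsingleton.elim _ _
  refine eq_zero_of_mul_eq_mul_of_aeval_eq_zero h (aeval_self_charpoly A) ?_ fun z hzB hz => ?_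
  · rw [charpoly_degree_eq_dim]; exact_mod_cast Fintype.card_pos
  · exact hAB.notMem_of_mem_right hzB (mem_spectrum_iff_isRoot_charpoly.mpr hz)

theorem Complex.inv_re_pos {z : ℂ} : 0 < z⁻¹.re ↔ 0 < z.re := by
  rcases eq_or_ne z 0 with rfl | hz
  · simp
  · rw [inv_re, div_pos_iff_of_pos_right (normSq_pos.mpr hz)]

theorem Matrix.eq_of_mul_self_eq_of_re_pos {n : Type*} [Fintype n] [DecidableEq n]
    {A B : Matrix n n ℂ} (h : A * A = B * B) (hA : ∀ z ∈ spectrum ℂ A, 0 < z.re)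
    (hB : ∀ z ∈ spectrum ℂ B, 0 < z.re) : A = B := by
  have hsylv : A * (A - B) = (A - B) * -B := by
    rw [mul_sub, sub_mul, mul_neg, mul_neg, h]; abel
  refine sub_eq_zero.mp (eq_zero_of_mul_eq_mul_of_disjoint_spectrum hsylv ?_)
  rw [← spectrum.neg_eq, Set.disjoint_left]
  intro z hzA hzB
  have := hB _ (Set.mem_neg.mp hzB)
  rw [Complex.neg_re] at this
  linarith [hA z hzA]

theorem Matrix.mem_spectrum_inv_conjTranspose_iff {n : Type*} [Fintype n] [DecidableEq n]
    {A : Matrix n n ℂ} (hA : IsUnit A) (z : ℂ) :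
    z ∈ spectrum ℂ (Aᴴ)⁻¹ ↔ star z⁻¹ ∈ spectrum ℂ A := by
  obtain ⟨u, rfl⟩ := hA
  rw [← star_eq_conjTranspose, ← Units.coe_star, ← coe_units_inv, ← spectrum.inv₀_mem_iff,
    Units.coe_star, spectrum.map_star, Set.mem_star]

theorem principal_sqrt_of_unitary_is_unitary_general
    (n : ℕ) (X R : Matrix (Fin n) (Fin n) ℂ)
    (hsq : R * R = X)
    (hre : ∀ z ∈ spectrum ℂ R, 0 < z.re)
    (hunitary : Xᴴ * X = 1) :
    Rᴴ * R = 1 := by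
  have hR : IsUnit R := by
    by_contra h
    simpa using hre 0 ((spectrum.zero_mem_iff ℂ).mpr h)
  have hsq' : (Rᴴ)⁻¹ * (Rᴴ)⁻¹ = R * R := by
    rw [← Matrix.mul_inv_rev, ← conjTranspose_mul, hsq, inv_eq_right_inv hunitary]
  have hre' : ∀ z ∈ spectrum ℂ (Rᴴ)⁻¹, 0 < z.re := fun z hz => by
    have h := hre _ ((mem_spectrum_inv_conjTranspose_iff hR z).mp hz)
    rwa [Complex.star_def, Complex.conj_re, Complex.inv_re_pos] at h
  have hRinv : (Rᴴ)⁻¹ = R := eq_of_mul_self_eq_of_re_pos hsq' hre' hre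
  calc Rᴴ * R = Rᴴ * (Rᴴ)⁻¹ := by rw [hRinv]
    _ = 1 := mul_nonsing_inv _ ((isUnit_iff_isUnit_det _).mp hR.star)

/-- If `X` is unitary with no eigenvalue on `(-∞, 0]`, and `R` is its principal
square root (`R² = X` with every eigenvalue of `R` having strictly positive real part), then `R`
is unitary. -/
theorem principal_sqrt_of_unitary_is_unitary
    (n : ℕ) (X R : Matrix (Fin n) (Fin n) ℂ)
    (hspec : ∀ z ∈ spectrum ℂ X, ¬ (z.im = 0 ∧ z.re ≤ 0))
    (hsq : R * R = X)
    (hre : ∀ z ∈ spectrum ℂ R, 0 < z.re)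
    (hunitary : Xᴴ * X = 1) :
    Rᴴ * R = 1 :=
  principal_sqrt_of_unitary_is_unitary_general n X R hsq hre hunitary
end

section
/- Let X be an n-by-n complex matrix with no eigenvalue on the closed negative real axis (-infinity, 0], and let R be the principal square root of X, i.e. R² = X and every eigenvalue of R has strictly positive real part. If every entry of X is real, then every entry of R is real. -/
/-!
Since `X` is real, the entrywise conjugate `S` of `R` is again a square root of `X`, and its
spectrum, the conjugate of that of `R`, lies in the right half-plane too. Two square roots `R`, `S`
of the same matrix satisfy `R (R - S) = (R - S) (-S)`; when `R` and `-S` have no common eigenvalue,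
Sylvester's theorem gives `R - S = 0`.
-/

open Polynomial

theorem Polynomial.aeval_mul_eq_mul_aeval_of_mul_eq {R A : Type*} [CommSemiring R] [Semiring A]
    [Algebra R A] {a b d : A} (h : a * d = d * b) (p : R[X]) :
    aeval a p * d = d * aeval b p := by
  have hpow (k : ℕ) : a ^ k * d = d * b ^ k := (SemiconjBy.pow_right h.symm k).symm
  induction p using Polynomial.induction_on' with
  | add p q hp hq => rw [map_add, map_add, add_mul, mul_add, hp, hq]
  | monomial k c =>
    rw [aeval_monomial, aeval_monomial, mul_assoc, hpow, ← mul_assoc, Algebra.commutes, mul_assoc]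

namespace Matrix

variable {n 𝕜 : Type*} [Fintype n] [DecidableEq n] [Field 𝕜]

theorem map_mem_spectrum_map_iff {L : Type*} [Field L] (f : 𝕜 →+* L) (M : Matrix n n 𝕜) (x : 𝕜) :
    f x ∈ spectrum L (M.map f) ↔ x ∈ spectrum 𝕜 M := by
  rw [mem_spectrum_iff_isRoot_charpoly, mem_spectrum_iff_isRoot_charpoly, charpoly_map,
    isRoot_map_iff f.injective]

/-- Sylvester: by spectral mapping `aeval B A.charpoly` is invertible, and by Cayley–Hamilton
`D * aeval B A.charpoly = aeval A A.charpoly * D = 0`. -/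
theorem eq_zero_of_mul_eq_mul_of_disjoint_spectrum_s7 [IsAlgClosed 𝕜] {A B D : Matrix n n 𝕜}
    (h : A * D = D * B) (hAB : Disjoint (spectrum 𝕜 A) (spectrum 𝕜 B)) : D = 0 := by
  cases isEmpty_or_nonempty n
  · exact Subsingleton.elim _ _
  have hdeg : 0 < A.charpoly.degree := by
    rw [charpoly_degree_eq_dim]
    exact_mod_cast Fintype.card_pos
  have hunit : IsUnit (aeval B A.charpoly) := by
    by_contra hB
    rw [← spectrum.zero_mem_iff 𝕜, spectrum.map_polynomial_aeval_of_degree_pos B _ hdeg] at hB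
    obtain ⟨μ, hμB, hμA⟩ := hB
    exact hAB.ne_of_mem (mem_spectrum_of_isRoot_charpoly hμA) hμB rfl
  have hD : D * aeval B A.charpoly = 0 := by
    rw [← aeval_mul_eq_mul_aeval_of_mul_eq h, aeval_self_charpoly, zero_mul]
  simpa using hunit.mul_left_eq_zero.mp hD

theorem eq_of_mul_self_eq_of_disjoint_spectrum_neg [IsAlgClosed 𝕜] {R S : Matrix n n 𝕜}
    (hRS : R * R = S * S) (hσ : Disjoint (spectrum 𝕜 R) (spectrum 𝕜 (-S))) : R = S := by
  have h : R * (R - S) = (R - S) * -S := by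
    rw [mul_sub, hRS, mul_neg, sub_mul, neg_sub]
  exact sub_eq_zero.mp (eq_zero_of_mul_eq_mul_of_disjoint_spectrum_s7 h hσ)

theorem eq_of_mul_self_eq_of_re_pos_s7 {R S : Matrix n n ℂ} (hRS : R * R = S * S)
    (hR : ∀ z ∈ spectrum ℂ R, 0 < z.re) (hS : ∀ z ∈ spectrum ℂ S, 0 < z.re) : R = S := by
  refine eq_of_mul_self_eq_of_disjoint_spectrum_neg hRS (Set.disjoint_left.mpr fun z hzR hzS => ?_)
  rw [← spectrum.neg_eq, Set.mem_neg] at hzS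
  have hneg := hS _ hzS
  rw [Complex.neg_re] at hneg
  linarith [hR z hzR]

theorem mem_spectrum_map_conj_iff (M : Matrix n n ℂ) (z : ℂ) :
    z ∈ spectrum ℂ (M.map (starRingEnd ℂ)) ↔ starRingEnd ℂ z ∈ spectrum ℂ M := by
  simpa using map_mem_spectrum_map_iff (starRingEnd ℂ) M (starRingEnd ℂ z)

end Matrix

open Matrix

theorem principal_sqrt_of_real_is_real_general
    (n : ℕ) (X R : Matrix (Fin n) (Fin n) ℂ)
    (hsq : R * R = X)
    (hre : ∀ z ∈ spectrum ℂ R, 0 < z.re)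
    (hreal : ∀ i j, (starRingEnd ℂ) (X i j) = X i j) :
    ∀ i j, (starRingEnd ℂ) (R i j) = R i j := by
  have hX : X.map (starRingEnd ℂ) = X := ext hreal
  have hsq' : R.map (starRingEnd ℂ) * R.map (starRingEnd ℂ) = R * R := by
    rw [← Matrix.map_mul, hsq, hX]
  have hre' : ∀ z ∈ spectrum ℂ (R.map (starRingEnd ℂ)), 0 < z.re := fun z hz => by
    simpa using hre _ ((mem_spectrum_map_conj_iff R z).mp hz)
  intro i j
  exact congrFun₂ (eq_of_mul_self_eq_of_re_pos_s7 hsq' hre' hre) i j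

/-- If `X` has real entries and no eigenvalue on `(-∞, 0]`, and `R` is its
principal square root, then `R` has real entries. -/
theorem principal_sqrt_of_real_is_real
    (n : ℕ) (X R : Matrix (Fin n) (Fin n) ℂ)
    (hspec : ∀ z ∈ spectrum ℂ X, ¬ (z.im = 0 ∧ z.re ≤ 0))
    (hsq : R * R = X)
    (hre : ∀ z ∈ spectrum ℂ R, 0 < z.re)
    (hreal : ∀ i j, (starRingEnd ℂ) (X i j) = X i j) :
    ∀ i j, (starRingEnd ℂ) (R i j) = R i j :=
  principal_sqrt_of_real_is_real_general n X R hsq hre hreal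
end

section
/- Let Y and Z be 2m-by-2m complex matrices such that I + 3ZY is invertible, and set Y' = (1/3) Y (I + 8 (I + 3ZY)⁻¹) and Z' = (1/3) (I + 8 (I + 3ZY)⁻¹) Z. If Y and Z are self-dual (Y^♯ = Y and Z^♯ = Z), then Y' and Z' are self-dual. -/
open Matrix

/-!
Since `Z₀⁻¹ = -Z₀`, the dual `X ↦ Z₀ Xᵀ Z₀⁻¹` is an anti-automorphism of the matrix algebra that
commutes with inversion. For self-dual `Y`, `Z` it therefore sends `(I + 3ZY)⁻¹` to `(I + 3YZ)⁻¹`,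
and the push-through identity `Y (I + 3ZY)⁻¹ = (I + 3YZ)⁻¹ Y` (and its mirror for `Z`) turns the
duals of `Y'` and `Z'` back into `Y'` and `Z'`.
-/

/-- The matrix `Z₀ = [[0, I], [-I, 0]]` on `ℂ^(m ⊕ m)`. -/
noncomputable def Zmat (m : ℕ) : Matrix (Fin m ⊕ Fin m) (Fin m ⊕ Fin m) ℂ :=
  Matrix.fromBlocks 0 1 (-1) 0

/-- The dual `X^♯ = -Z₀ Xᵀ Z₀` of a `2m × 2m` complex matrix. -/
noncomputable def dual {m : ℕ} (X : Matrix (Fin m ⊕ Fin m) (Fin m ⊕ Fin m) ℂ) :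
    Matrix (Fin m ⊕ Fin m) (Fin m ⊕ Fin m) ℂ :=
  -(Zmat m * Xᵀ * Zmat m)

/-- No invertibility is needed: if `1 + BA` is singular then so is `1 + AB`, and both inverses
are the junk value `0`. -/
theorem Matrix.mul_inv_one_add_mul_comm {m n α : Type*} [Fintype m] [Fintype n] [DecidableEq m]
    [DecidableEq n] [CommRing α] (A : Matrix m n α) (B : Matrix n m α) :
    A * (1 + B * A)⁻¹ = (1 + A * B)⁻¹ * A := by
  by_cases h : IsUnit (1 + B * A).det
  · have h' : IsUnit (1 + A * B).det := by rwa [det_one_add_mul_comm]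
    have hcomm : A * (1 + B * A) = (1 + A * B) * A := by
      simp only [Matrix.mul_add, Matrix.add_mul, Matrix.mul_one, Matrix.one_mul, Matrix.mul_assoc]
    calc A * (1 + B * A)⁻¹ = (1 + A * B)⁻¹ * ((1 + A * B) * A) * (1 + B * A)⁻¹ := by
          rw [nonsing_inv_mul_cancel_left _ _ h']
      _ = (1 + A * B)⁻¹ * A := by
          rw [← hcomm, ← Matrix.mul_assoc, mul_nonsing_inv_cancel_right _ _ h]
  · have h' : ¬IsUnit (1 + A * B).det := by rwa [det_one_add_mul_comm]
    rw [nonsing_inv_apply_not_isUnit _ h, nonsing_inv_apply_not_isUnit _ h', Matrix.mul_zero,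
      Matrix.zero_mul]

theorem Zmat_mul_self (m : ℕ) : Zmat m * Zmat m = -1 := by
  simp [Zmat, fromBlocks_multiply, ← fromBlocks_one, fromBlocks_neg]

theorem inv_Zmat (m : ℕ) : (Zmat m)⁻¹ = -Zmat m :=
  inv_eq_left_inv (by rw [Matrix.neg_mul, Zmat_mul_self, neg_neg])

theorem isUnit_det_Zmat (m : ℕ) : IsUnit (Zmat m).det :=
  isUnit_det_of_left_inverse (B := -Zmat m) (by rw [Matrix.neg_mul, Zmat_mul_self, neg_neg])

theorem dual_eq_mul_transpose_mul_inv {m : ℕ} (X : Matrix (Fin m ⊕ Fin m) (Fin m ⊕ Fin m) ℂ) :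
    dual X = Zmat m * Xᵀ * (Zmat m)⁻¹ := by
  rw [dual, inv_Zmat, Matrix.mul_neg]

theorem dual_one (m : ℕ) : dual (1 : Matrix (Fin m ⊕ Fin m) (Fin m ⊕ Fin m) ℂ) = 1 := by
  rw [dual, transpose_one, Matrix.mul_one, Zmat_mul_self, neg_neg]

theorem dual_add {m : ℕ} (A B : Matrix (Fin m ⊕ Fin m) (Fin m ⊕ Fin m) ℂ) :
    dual (A + B) = dual A + dual B := by
  rw [dual, dual, dual, transpose_add, Matrix.mul_add, Matrix.add_mul, neg_add]

theorem dual_smul {m : ℕ} (c : ℂ) (A : Matrix (Fin m ⊕ Fin m) (Fin m ⊕ Fin m) ℂ) :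
    dual (c • A) = c • dual A := by
  rw [dual, dual, transpose_smul, Matrix.mul_smul, Matrix.smul_mul, smul_neg]

theorem dual_mul {m : ℕ} (A B : Matrix (Fin m ⊕ Fin m) (Fin m ⊕ Fin m) ℂ) :
    dual (A * B) = dual B * dual A := by
  simp only [dual_eq_mul_transpose_mul_inv, transpose_mul, Matrix.mul_assoc,
    nonsing_inv_mul_cancel_left _ _ (isUnit_det_Zmat m)]

theorem dual_inv {m : ℕ} (A : Matrix (Fin m ⊕ Fin m) (Fin m ⊕ Fin m) ℂ) :
    dual A⁻¹ = (dual A)⁻¹ := by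
  rw [dual_eq_mul_transpose_mul_inv, dual_eq_mul_transpose_mul_inv, Matrix.mul_inv_rev,
    Matrix.mul_inv_rev, nonsing_inv_nonsing_inv _ (isUnit_det_Zmat m), transpose_nonsing_inv,
    Matrix.mul_assoc]

theorem iteration_step_preserves_selfDual_general
    (m : ℕ) (Y Z : Matrix (Fin m ⊕ Fin m) (Fin m ⊕ Fin m) ℂ)
    (Y' Z' : Matrix (Fin m ⊕ Fin m) (Fin m ⊕ Fin m) ℂ)
    (hY' : Y' = (3 : ℂ)⁻¹ • (Y * (1 + (8 : ℂ) • (1 + (3 : ℂ) • (Z * Y))⁻¹)))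
    (hZ' : Z' = (3 : ℂ)⁻¹ • ((1 + (8 : ℂ) • (1 + (3 : ℂ) • (Z * Y))⁻¹) * Z))
    (hYd : dual Y = Y) (hZd : dual Z = Z) :
    dual Y' = Y' ∧ dual Z' = Z' := by
  have hdual : dual (1 + (3 : ℂ) • (Z * Y))⁻¹ = (1 + (3 : ℂ) • (Y * Z))⁻¹ := by
    rw [dual_inv, dual_add, dual_one, dual_smul, dual_mul, hYd, hZd]
  have hY : Y * (1 + (3 : ℂ) • (Z * Y))⁻¹ = (1 + (3 : ℂ) • (Y * Z))⁻¹ * Y := by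
    rw [← smul_mul_assoc, ← mul_smul_comm, mul_inv_one_add_mul_comm]
  have hZ : (1 + (3 : ℂ) • (Z * Y))⁻¹ * Z = Z * (1 + (3 : ℂ) • (Y * Z))⁻¹ := by
    rw [← mul_smul_comm, ← smul_mul_assoc, mul_inv_one_add_mul_comm]
  constructor
  · rw [hY', dual_smul, dual_mul, dual_add, dual_one, dual_smul, hdual, hYd, Matrix.add_mul,
      Matrix.mul_add, smul_mul_assoc, mul_smul_comm, Matrix.one_mul, Matrix.mul_one, hY]
  · rw [hZ', dual_smul, dual_mul, dual_add, dual_one, dual_smul, hdual, hZd, Matrix.add_mul,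
      Matrix.mul_add, smul_mul_assoc, mul_smul_comm, Matrix.one_mul, Matrix.mul_one, hZ]

/-- The square-root iteration step
`Y' = (1/3) Y (I + 8 (I + 3ZY)⁻¹)`, `Z' = (1/3) (I + 8 (I + 3ZY)⁻¹) Z`
preserves self-duality. -/
theorem iteration_step_preserves_selfDual
    (m : ℕ) (Y Z : Matrix (Fin m ⊕ Fin m) (Fin m ⊕ Fin m) ℂ)
    (hinv : IsUnit (1 + (3 : ℂ) • (Z * Y)))
    (Y' Z' : Matrix (Fin m ⊕ Fin m) (Fin m ⊕ Fin m) ℂ)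
    (hY' : Y' = (3 : ℂ)⁻¹ • (Y * (1 + (8 : ℂ) • (1 + (3 : ℂ) • (Z * Y))⁻¹)))
    (hZ' : Z' = (3 : ℂ)⁻¹ • ((1 + (8 : ℂ) • (1 + (3 : ℂ) • (Z * Y))⁻¹) * Z))
    (hYd : dual Y = Y) (hZd : dual Z = Z) :
    dual Y' = Y' ∧ dual Z' = Z' :=
  iteration_step_preserves_selfDual_general m Y Z Y' Z' hY' hZ' hYd hZd
end
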